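/- arXiv:1405.1182 — 6 statements merged into one kernel-verified Lean document; each statement's English description precedes it below -/
import Mathlib

section
/- Define polynomials R_n (over ℝ[T][x], or ℝ[x] with a parameter T) by R_1(x) = x and R_{n+1}(x) = (x^2 - 4T) R_n'(x) - (2n-1) x R_n(x) for n ≥ 1. Then for all n ≥ 2, the degree of R_n is exactly n - 2. -/
open Polynomial

lemma step_deg (p : Polynomial ℝ) (c b : ℝ) (d : ℕ) (hd1 : 1 ≤ d) (hp : p ≠ 0)
    (hd : p.natDegree = d) (hb : (d : ℝ) ≠ b) :
    ((X ^ 2 - C c) * p.derivative - C b * X * p).natDegree = d + 1 := by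
  have ha : p.coeff d ≠ 0 := by
    rw [← hd]; exact mt leadingCoeff_eq_zero.mp hp
  have hcoeff : ((X ^ 2 - C c) * p.derivative - C b * X * p).coeff (d + 1)
      = ((d : ℝ) - b) * p.coeff d := by
    have e1 : ((X ^ 2 - C c) * p.derivative).coeff (d + 1) = (d : ℝ) * p.coeff d := by
      rw [sub_mul, coeff_sub]
      have h2 : d + 1 = (d - 1) + 2 := by omega
      rw [h2, coeff_X_pow_mul, coeff_derivative, coeff_C_mul, coeff_derivative]
      have h3 : d - 1 + 1 = d := by omega
      have h4 : p.coeff (d - 1 + 2 + 1) = 0 :=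
        coeff_eq_zero_of_natDegree_lt (by omega)
      rw [h3, h4, Nat.cast_sub hd1]
      push_cast
      ring
    have e2 : (C b * X * p).coeff (d + 1) = b * p.coeff d := by
      rw [mul_assoc, coeff_C_mul, coeff_X_mul]
    rw [coeff_sub, e1, e2]; ring
  have hne : ((X ^ 2 - C c) * p.derivative - C b * X * p).coeff (d + 1) ≠ 0 := by
    rw [hcoeff]; exact mul_ne_zero (sub_ne_zero.mpr hb) ha
  have hle : ((X ^ 2 - C c) * p.derivative - C b * X * p).natDegree ≤ d + 1 := by
    refine le_trans (natDegree_sub_le _ _) (max_le ?_ ?_)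
    · refine le_trans (natDegree_mul_le) ?_
      have hx : (X ^ 2 - C c : Polynomial ℝ).natDegree ≤ 2 :=
        le_trans (natDegree_sub_le _ _) (by simp)
      have hdv : (derivative p).natDegree ≤ d - 1 := hd ▸ natDegree_derivative_le p
      omega
    · refine le_trans (natDegree_mul_le) ?_
      have : (C b * X : Polynomial ℝ).natDegree ≤ 1 :=
        le_trans natDegree_mul_le (by simp)
      omega
  exact le_antisymm hle (le_natDegree_of_ne_zero hne)

theorem stmt_1 (T : ℝ) (hT : T ≠ 0) (R : ℕ → Polynomial ℝ)
    (h1 : R 1 = Polynomial.X)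
    (hrec : ∀ n : ℕ, 1 ≤ n →
      R (n + 1) = (Polynomial.X ^ 2 - Polynomial.C (4 * T)) * (R n).derivative
        - Polynomial.C (2 * (n : ℝ) - 1) * Polynomial.X * R n) :
    ∀ n : ℕ, 2 ≤ n → (R n).natDegree = n - 2 := by
  have hR2 : R 2 = -C (4 * T) := by
    have := hrec 1 le_rfl
    rw [h1, derivative_X] at this
    rw [this, show (2 * ((1:ℕ):ℝ) - 1) = 1 by norm_num, map_one]
    ring
  have hR3 : R 3 = C (12 * T) * X := by
    have := hrec 2 (by norm_num)
    rw [hR2, derivative_neg, derivative_C, neg_zero] at this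
    rw [this, show (2 * ((2:ℕ):ℝ) - 1) = 3 by norm_num,
      show (C (12 * T) : Polynomial ℝ) = C 3 * C (4 * T) by rw [← map_mul]; congr 1; ring]
    ring
  have key : ∀ n : ℕ, 3 ≤ n → (R n).natDegree = n - 2 := by
    intro n hn
    induction n, hn using Nat.le_induction with
    | base => rw [hR3, natDegree_C_mul (mul_ne_zero (by norm_num) hT), natDegree_X]
    | succ n hn ih =>
      have hd1 : 1 ≤ n - 2 := by omega
      have hpne : R n ≠ 0 := by
        intro h; rw [h, natDegree_zero] at ih; omega
      have hb : ((n - 2 : ℕ) : ℝ) ≠ 2 * (n : ℝ) - 1 := by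
        have : ((n - 2 : ℕ) : ℝ) = (n : ℝ) - 2 := by
          push_cast [Nat.cast_sub (by omega : 2 ≤ n)]; ring
        rw [this]; intro h; nlinarith [show (3:ℝ) ≤ n by exact_mod_cast hn]
      have := step_deg (R n) (4 * T) (2 * (n : ℝ) - 1) (n - 2) hd1 hpne ih hb
      rw [hrec n (by omega), this]
      omega
  intro n hn
  rcases eq_or_lt_of_le hn with h | h
  · rw [← h, hR2, natDegree_neg, natDegree_C]
  · exact key n h
end

section
/- With R_1(x) = x and R_{n+1}(x) = (x^2 - 4T) R_n'(x) - (2n-1) x R_n(x), for every n ≥ 2 the coefficient of x^{n-2} in R_n equals 2T·(-1)^{n+1}·n!. -/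
open Polynomial

theorem stmt_3 (T : ℝ) (R : ℕ → Polynomial ℝ)
    (h1 : R 1 = Polynomial.X)
    (hrec : ∀ n : ℕ, 1 ≤ n →
      R (n + 1) = (Polynomial.X ^ 2 - Polynomial.C (4 * T)) * (R n).derivative
        - Polynomial.C (2 * (n : ℝ) - 1) * Polynomial.X * R n) :
    ∀ n : ℕ, 2 ≤ n →
      (R n).coeff (n - 2) = 2 * T * (-1 : ℝ) ^ (n + 1) * (Nat.factorial n : ℝ) := by
  have hR2 : R 2 = -Polynomial.C (4 * T) := by
    have h := hrec 1 le_rfl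
    rw [h1] at h
    rw [h, Polynomial.derivative_X, mul_one]
    rw [show (2 * ((1:ℕ):ℝ) - 1) = 1 by norm_num, Polynomial.C_1, one_mul]
    ring
  have hhi : ∀ n : ℕ, ∀ k : ℕ, n + 1 ≤ k → (R (n + 2)).coeff k = 0 := by
    intro n
    induction n with
    | zero =>
      intro k hk
      rw [hR2]
      rw [Polynomial.coeff_neg, Polynomial.coeff_C, if_neg (by omega : k ≠ 0), neg_zero]
    | succ n ih =>
      intro k hk
      obtain ⟨j, rfl⟩ : ∃ j, k = j + 2 := ⟨k - 2, by omega⟩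
      rw [show n + 1 + 2 = (n + 2) + 1 from rfl, hrec (n + 2) (by omega),
        sub_mul, mul_assoc, Polynomial.coeff_sub, Polynomial.coeff_sub,
        Polynomial.coeff_X_pow_mul, Polynomial.coeff_C_mul, Polynomial.coeff_C_mul,
        Polynomial.coeff_derivative, Polynomial.coeff_derivative,
        show j + 2 = (j + 1) + 1 from rfl, Polynomial.coeff_X_mul,
        ih (j + 1) (by omega), ih (j + 1 + 1 + 1) (by omega)]
      ring
  have hmain : ∀ n : ℕ, 3 ≤ n →
      (R n).coeff (n - 2) = 2 * T * (-1 : ℝ) ^ (n + 1) * (Nat.factorial n : ℝ) := by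
    intro n hn
    induction n, hn using Nat.le_induction with
    | base =>
      have h := hrec 2 (by omega)
      rw [hR2] at h
      rw [show (3:ℕ) - 2 = 1 from rfl, h, Polynomial.derivative_neg, Polynomial.derivative_C,
        neg_zero, mul_zero, zero_sub, Polynomial.coeff_neg, mul_neg, Polynomial.coeff_neg,
        neg_neg, Polynomial.coeff_mul_C, Polynomial.coeff_C_mul, Polynomial.coeff_X_one]
      norm_num [Nat.factorial]
      ring
    | succ n hn ih =>
      obtain ⟨j, rfl⟩ : ∃ j, n = j + 3 := ⟨n - 3, by omega⟩
      rw [show j + 3 - 2 = j + 1 from rfl] at ih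
      rw [show j + 3 + 1 - 2 = j + 2 from rfl,
        hrec (j + 3) (by omega),
        sub_mul, mul_assoc, Polynomial.coeff_sub, Polynomial.coeff_sub,
        Polynomial.coeff_X_pow_mul, Polynomial.coeff_C_mul, Polynomial.coeff_C_mul,
        Polynomial.coeff_derivative, Polynomial.coeff_derivative,
        show j + 2 = (j + 1) + 1 from rfl, Polynomial.coeff_X_mul,
        show j + 3 = (j + 1) + 2 from rfl,
        hhi (j + 1) (j + 1 + 1 + 1) (by omega), ih]
      push_cast [Nat.factorial_succ, pow_succ]
      ring
  intro n hn
  rcases eq_or_lt_of_le hn with h | h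
  · rw [← h, hR2]
    rw [Polynomial.coeff_neg, Polynomial.coeff_C, if_pos rfl]
    norm_num [Nat.factorial]
    ring
  · exact hmain n h
end

section
/- Let y_i = sqrt(x_i^2 - 4T) and define W_2^{(0)}(x_1, x_2) = -(y_1 y_2 - x_1 x_2 + 4T) / (2 (x_1 - x_2)^2 y_1 y_2) for x_1 ≠ x_2. Then W_2^{(0)} extends continuously to the diagonal, and for x^2 > 4T the diagonal value is W_2^{(0)}(x, x) = T / (x^2 - 4T)^2. -/
theorem stmt_7 (T : ℝ) (hT : 0 < T) (x : ℝ) (hx : x ^ 2 > 4 * T) :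
    Filter.Tendsto
      (fun p : ℝ × ℝ =>
        -(Real.sqrt (p.1 ^ 2 - 4 * T) * Real.sqrt (p.2 ^ 2 - 4 * T) - p.1 * p.2 + 4 * T)
          / (2 * (p.1 - p.2) ^ 2 * Real.sqrt (p.1 ^ 2 - 4 * T) * Real.sqrt (p.2 ^ 2 - 4 * T)))
      (nhdsWithin (x, x) {p : ℝ × ℝ | p.1 ≠ p.2})
      (nhds (T / (x ^ 2 - 4 * T) ^ 2)) := by
  set g : ℝ × ℝ → ℝ := fun p =>
    2 * T / ((Real.sqrt (p.1 ^ 2 - 4 * T) * Real.sqrt (p.2 ^ 2 - 4 * T) + p.1 * p.2 - 4 * T)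
      * (Real.sqrt (p.1 ^ 2 - 4 * T) * Real.sqrt (p.2 ^ 2 - 4 * T))) with hg
  have hxpos : (0:ℝ) < x ^ 2 - 4 * T := by linarith
  have hsq : Real.sqrt (x ^ 2 - 4 * T) * Real.sqrt (x ^ 2 - 4 * T) = x ^ 2 - 4 * T :=
    Real.mul_self_sqrt hxpos.le
  have hgval : g (x, x) = T / (x ^ 2 - 4 * T) ^ 2 := by
    simp only [hg, hsq]
    have hxx : x * x = x ^ 2 := by ring
    rw [hxx]
    rw [show (x ^ 2 - 4 * T + x ^ 2 - 4 * T) * (x ^ 2 - 4 * T)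
        = 2 * (x ^ 2 - 4 * T) ^ 2 by ring]
    field_simp
  -- continuity of g at (x,x)
  have hcont : ContinuousAt g (x, x) := by
    apply ContinuousAt.div
    · fun_prop
    · fun_prop
    · simp only [hsq]
      have : x * x = x ^ 2 := by ring
      rw [this]
      nlinarith [hxpos]
  have htends : Filter.Tendsto g (nhdsWithin (x, x) {p : ℝ × ℝ | p.1 ≠ p.2})
      (nhds (T / (x ^ 2 - 4 * T) ^ 2)) := by
    rw [← hgval]
    exact hcont.continuousWithinAt.tendsto
  refine htends.congr' ?_
  -- eventual equality on the punctured neighborhood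
  have hopen : IsOpen {p : ℝ × ℝ | 4 * T < p.1 ^ 2 ∧ 4 * T < p.2 ^ 2 ∧ 4 * T < p.1 * p.2} := by
    apply IsOpen.and
    · exact isOpen_lt continuous_const ((continuous_fst.pow 2))
    apply IsOpen.and
    · exact isOpen_lt continuous_const ((continuous_snd.pow 2))
    · exact isOpen_lt continuous_const (continuous_fst.mul continuous_snd)
  have hmem : {p : ℝ × ℝ | 4 * T < p.1 ^ 2 ∧ 4 * T < p.2 ^ 2 ∧ 4 * T < p.1 * p.2}
      ∈ nhdsWithin (x, x) {p : ℝ × ℝ | p.1 ≠ p.2} := by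
    apply nhdsWithin_le_nhds
    refine hopen.mem_nhds ?_
    refine ⟨hx, hx, ?_⟩
    nlinarith
  filter_upwards [hmem, self_mem_nhdsWithin] with p hp hne
  obtain ⟨h1, h2, h3⟩ := hp
  set y1 := Real.sqrt (p.1 ^ 2 - 4 * T) with hy1def
  set y2 := Real.sqrt (p.2 ^ 2 - 4 * T) with hy2def
  have hy1 : y1 ^ 2 = p.1 ^ 2 - 4 * T := Real.sq_sqrt (by linarith)
  have hy2 : y2 ^ 2 = p.2 ^ 2 - 4 * T := Real.sq_sqrt (by linarith)
  have hy1p : 0 < y1 := Real.sqrt_pos.mpr (by linarith)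
  have hy2p : 0 < y2 := Real.sqrt_pos.mpr (by linarith)
  have hdiff : p.1 - p.2 ≠ 0 := sub_ne_zero.mpr hne
  have hd1 : (2 * (p.1 - p.2) ^ 2 * y1 * y2) ≠ 0 := by positivity
  have hd2 : ((y1 * y2 + p.1 * p.2 - 4 * T) * (y1 * y2)) ≠ 0 := by
    have : 0 < y1 * y2 + p.1 * p.2 - 4 * T := by nlinarith [mul_pos hy1p hy2p]
    positivity
  simp only [hg]
  rw [← hy1def, ← hy2def, div_eq_div_iff hd2 hd1]
  linear_combination ((y1 * y2) * y2 ^ 2) * hy1 + ((y1 * y2) * (p.1 ^ 2 - 4 * T)) * hy2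
end

section
/- Define a sequence of pairs of polynomials (P_1^{(g)}, P_2^{(g)}) in ℝ[x] (depending on a parameter T) by P_1^{(1)}(x) = 1/2, P_2^{(1)}(x) = -x/2, and for g ≥ 2: P_1^{(g)} = -x(3g-5)P_1^{(g-1)} + (x^2-4T)(P_1^{(g-1)})' + Σ_{p=1}^{g-1}(P_1^{(p)}P_2^{(g-p)} + P_2^{(p)}P_1^{(g-p)}), P_2^{(g)} = -x(3g-4)P_2^{(g-1)} + (x^2-4T)(P_2^{(g-1)})' + Σ_{p=1}^{g-1}(P_2^{(p)}P_2^{(g-p)} + P_1^{(p)}P_1^{(g-p)}). Then for all g ≥ 1, deg P_1^{(g)} ≤ g-1 and deg P_2^{(g)} ≤ g. -/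
open Polynomial in
lemma deriv_term_bound' (c : ℝ) (q : Polynomial ℝ) (m : ℕ) (hq : q.natDegree ≤ m) :
    ((Polynomial.X ^ 2 - Polynomial.C c) * q.derivative).natDegree ≤ m + 1 := by
  rcases eq_or_ne q.natDegree 0 with h | h
  · rw [eq_C_of_natDegree_eq_zero h]
    simp
  · refine natDegree_mul_le.trans ?_
    have h1 : (X ^ 2 - C c : Polynomial ℝ).natDegree ≤ 2 :=
      (natDegree_sub_le _ _).trans (by simp)
    have h2 : q.derivative.natDegree ≤ q.natDegree - 1 := natDegree_derivative_le q
    omega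

open Polynomial in
lemma neg_CX_term_bound (c : ℝ) (q : Polynomial ℝ) (m : ℕ) (hq : q.natDegree ≤ m) :
    (-(Polynomial.C c * Polynomial.X) * q).natDegree ≤ m + 1 := by
  refine natDegree_mul_le.trans ?_
  have h1 : (-(C c * X) : Polynomial ℝ).natDegree ≤ 1 := by
    rw [natDegree_neg]
    exact natDegree_mul_le.trans (by simp)
  omega

theorem stmt_12 (T : ℝ) (P1 P2 : ℕ → Polynomial ℝ)
    (h1 : P1 1 = Polynomial.C (1 / 2))
    (h2 : P2 1 = -(Polynomial.C (1 / 2) * Polynomial.X))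
    (hrec1 : ∀ g : ℕ, 2 ≤ g →
      P1 g = -(Polynomial.C (3 * (g : ℝ) - 5) * Polynomial.X) * P1 (g - 1)
        + (Polynomial.X ^ 2 - Polynomial.C (4 * T)) * (P1 (g - 1)).derivative
        + ∑ p ∈ Finset.Icc 1 (g - 1), (P1 p * P2 (g - p) + P2 p * P1 (g - p)))
    (hrec2 : ∀ g : ℕ, 2 ≤ g →
      P2 g = -(Polynomial.C (3 * (g : ℝ) - 4) * Polynomial.X) * P2 (g - 1)
        + (Polynomial.X ^ 2 - Polynomial.C (4 * T)) * (P2 (g - 1)).derivative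
        + ∑ p ∈ Finset.Icc 1 (g - 1), (P2 p * P2 (g - p) + P1 p * P1 (g - p))) :
    ∀ g : ℕ, 1 ≤ g → (P1 g).natDegree ≤ g - 1 ∧ (P2 g).natDegree ≤ g := by
  intro g
  induction g using Nat.strong_induction_on with
  | _ g ih =>
    intro hg
    match g, hg with
    | 1, _ =>
      refine ⟨by simp [h1], ?_⟩
      rw [h2, Polynomial.natDegree_neg]
      exact Polynomial.natDegree_mul_le.trans (by simp)
    | (n+2), _ =>
      have hih : ∀ m, 1 ≤ m → m ≤ n + 1 →
          (P1 m).natDegree ≤ m - 1 ∧ (P2 m).natDegree ≤ m := fun m h1m h2m =>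
        ih m (by omega) h1m
      constructor
      · rw [hrec1 (n+2) (by omega)]
        simp only [show n + 2 - 1 = n + 1 from rfl]
        refine (Polynomial.natDegree_add_le _ _).trans (max_le
          ((Polynomial.natDegree_add_le _ _).trans (max_le ?_ ?_)) ?_)
        · have := (hih (n+1) (by omega) le_rfl).1
          exact (neg_CX_term_bound _ _ n (by omega)).trans (by omega)
        · have := (hih (n+1) (by omega) le_rfl).1
          exact (deriv_term_bound' _ _ n (by omega)).trans (by omega)
        · refine Polynomial.natDegree_sum_le_of_forall_le _ _ (fun p hp => ?_)
          simp only [Finset.mem_Icc] at hp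
          have hA := hih p hp.1 hp.2
          have hB := hih (n + 2 - p) (by omega) (by omega)
          refine (Polynomial.natDegree_add_le _ _).trans (max_le ?_ ?_)
          · exact Polynomial.natDegree_mul_le.trans (by omega)
          · exact Polynomial.natDegree_mul_le.trans (by omega)
      · rw [hrec2 (n+2) (by omega)]
        simp only [show n + 2 - 1 = n + 1 from rfl]
        refine (Polynomial.natDegree_add_le _ _).trans (max_le
          ((Polynomial.natDegree_add_le _ _).trans (max_le ?_ ?_)) ?_)
        · have := (hih (n+1) (by omega) le_rfl).2
          exact (neg_CX_term_bound _ _ (n+1) (by omega)).trans (by omega)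
        · have := (hih (n+1) (by omega) le_rfl).2
          exact (deriv_term_bound' _ _ (n+1) (by omega)).trans (by omega)
        · refine Polynomial.natDegree_sum_le_of_forall_le _ _ (fun p hp => ?_)
          simp only [Finset.mem_Icc] at hp
          have hA := hih p hp.1 hp.2
          have hB := hih (n + 2 - p) (by omega) (by omega)
          refine (Polynomial.natDegree_add_le _ _).trans (max_le ?_ ?_)
          · exact Polynomial.natDegree_mul_le.trans (by omega)
          · exact Polynomial.natDegree_mul_le.trans (by omega)
end

section
/- If functions W_1^{(p)} : (a, ∞) → ℝ (for p = 1, …, g) satisfy W_1^{(p)}(x) = O(x^{-2p-1}) as x → ∞ for all p ≤ g-1, W_1^{(p)} is differentiable with (W_1^{(p)})'(x) = O(x^{-2p-2}), there is a function W_2^{(g-2)}(x,x) = O(x^{-2g}), and the loop relation sqrt(x^2 - 4T) · W_1^{(g)}(x) = Σ_{p=1}^{g-1} W_1^{(p)}(x) W_1^{(g-p)}(x) + ℏ (W_1^{(g-1)})'(x) + W_2^{(g-2)}(x,x) holds for x large, then W_1^{(g)}(x) = O(x^{-2g-1}) as x → ∞. -/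
open Filter Asymptotics

lemma pow_inv_mono (m n : ℕ) (h : m ≤ n) :
    (fun x : ℝ => (x ^ n)⁻¹) =O[atTop] fun x : ℝ => (x ^ m)⁻¹ := by
  refine IsBigO.of_bound 1 ?_
  filter_upwards [eventually_ge_atTop (1 : ℝ)] with x hx
  have h1 : (0:ℝ) < x ^ m := by positivity
  have h2 : x ^ m ≤ x ^ n := pow_le_pow_right₀ hx h
  simp only [Real.norm_eq_abs, one_mul]
  rw [abs_of_nonneg (show (0:ℝ) ≤ (x ^ n)⁻¹ by positivity),
    abs_of_nonneg (show (0:ℝ) ≤ (x ^ m)⁻¹ by positivity)]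
  exact inv_anti₀ h1 h2

theorem stmt_17 (T hbar : ℝ) (hT : 0 < T) (g : ℕ) (hg : 2 ≤ g)
    (W1 : ℕ → ℝ → ℝ) (W2 : ℝ → ℝ)
    (hO : ∀ p : ℕ, 1 ≤ p → p ≤ g - 1 →
      (W1 p) =O[atTop] fun x : ℝ => (x ^ (2 * p + 1))⁻¹)
    (hdiff : ∀ p : ℕ, 1 ≤ p → p ≤ g - 1 → Differentiable ℝ (W1 p))
    (hderiv : ∀ p : ℕ, 1 ≤ p → p ≤ g - 1 →
      (deriv (W1 p)) =O[atTop] fun x : ℝ => (x ^ (2 * p + 2))⁻¹)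
    (hW2 : W2 =O[atTop] fun x : ℝ => (x ^ (2 * g))⁻¹)
    (hloop : ∀ᶠ x : ℝ in atTop,
      Real.sqrt (x ^ 2 - 4 * T) * W1 g x =
        (∑ p ∈ Finset.Icc 1 (g - 1), W1 p x * W1 (g - p) x)
          + hbar * deriv (W1 (g - 1)) x + W2 x) :
    (W1 g) =O[atTop] fun x : ℝ => (x ^ (2 * g + 1))⁻¹ := by
  -- sum term
  have hsum : (fun x : ℝ => ∑ p ∈ Finset.Icc 1 (g - 1), W1 p x * W1 (g - p) x)
      =O[atTop] fun x : ℝ => (x ^ (2 * g))⁻¹ := by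
    refine IsBigO.fun_sum fun p hp => ?_
    obtain ⟨hp1, hp2⟩ := Finset.mem_Icc.mp hp
    have h1 : 1 ≤ g - p := by omega
    have h2 : g - p ≤ g - 1 := by omega
    have := (hO p hp1 hp2).mul (hO (g - p) h1 h2)
    have heq : (fun x : ℝ => (x ^ (2 * p + 1))⁻¹ * (x ^ (2 * (g - p) + 1))⁻¹)
        = fun x : ℝ => (x ^ (2 * g + 2))⁻¹ := by
      funext x
      have hE : 2 * p + 1 + (2 * (g - p) + 1) = 2 * g + 2 := by omega
      rw [← mul_inv, ← pow_add, hE]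
    rw [heq] at this
    exact this.trans (pow_inv_mono (2 * g) (2 * g + 2) (by omega))
  -- derivative term
  have hd : (fun x : ℝ => hbar * deriv (W1 (g - 1)) x) =O[atTop]
      fun x : ℝ => (x ^ (2 * g))⁻¹ := by
    have := (hderiv (g - 1) (by omega) le_rfl).const_mul_left hbar
    have heq : 2 * (g - 1) + 2 = 2 * g := by omega
    rwa [heq] at this
  -- product with sqrt
  have hF : (fun x : ℝ => Real.sqrt (x ^ 2 - 4 * T) * W1 g x) =O[atTop]
      fun x : ℝ => (x ^ (2 * g))⁻¹ := by
    exact ((hsum.add hd).add hW2).congr' (hloop.mono fun x hx => hx.symm) EventuallyEq.rfl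
  -- inverse sqrt bound
  have hsq : ∀ᶠ x : ℝ in atTop, x / 2 ≤ Real.sqrt (x ^ 2 - 4 * T) := by
    filter_upwards [eventually_ge_atTop (max 1 (Real.sqrt (8 * T)))] with x hx
    have hx1 : (1:ℝ) ≤ x := le_trans (le_max_left _ _) hx
    have hx2 : Real.sqrt (8 * T) ≤ x := le_trans (le_max_right _ _) hx
    have h8 : 8 * T ≤ x ^ 2 := by
      nlinarith [Real.sq_sqrt (by linarith : (0:ℝ) ≤ 8 * T), Real.sqrt_nonneg (8 * T)]
    have : (x / 2) ^ 2 ≤ x ^ 2 - 4 * T := by nlinarith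
    calc x / 2 = Real.sqrt ((x / 2) ^ 2) := by
          rw [Real.sqrt_sq (by linarith)]
      _ ≤ Real.sqrt (x ^ 2 - 4 * T) := Real.sqrt_le_sqrt this
  have hinv : (fun x : ℝ => (Real.sqrt (x ^ 2 - 4 * T))⁻¹) =O[atTop]
      fun x : ℝ => x⁻¹ := by
    refine IsBigO.of_bound 2 ?_
    filter_upwards [hsq, eventually_ge_atTop (1 : ℝ)] with x hx hx1
    have hpos : 0 < Real.sqrt (x ^ 2 - 4 * T) := lt_of_lt_of_le (by linarith) hx
    have hx0 : (0:ℝ) < x := by linarith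
    simp only [Real.norm_eq_abs]
    rw [abs_of_nonneg (show (0:ℝ) ≤ (Real.sqrt (x ^ 2 - 4 * T))⁻¹ by positivity),
      abs_of_nonneg (show (0:ℝ) ≤ x⁻¹ by positivity)]
    calc (Real.sqrt (x ^ 2 - 4 * T))⁻¹ ≤ (x / 2)⁻¹ :=
          inv_anti₀ (by linarith) hx
      _ = 2 * x⁻¹ := by field_simp
  -- conclude
  have hmain : (W1 g) =O[atTop] fun x : ℝ => x⁻¹ * (x ^ (2 * g))⁻¹ := by
    refine (hinv.mul hF).congr' ?_ EventuallyEq.rfl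
    filter_upwards [hsq, eventually_ge_atTop (1 : ℝ)] with x hx hx1
    have hpos : 0 < Real.sqrt (x ^ 2 - 4 * T) := lt_of_lt_of_le (by linarith) hx
    field_simp
  have heq : (fun x : ℝ => x⁻¹ * (x ^ (2 * g))⁻¹) = fun x : ℝ => (x ^ (2 * g + 1))⁻¹ := by
    funext x
    rw [← mul_inv, pow_succ, mul_comm]
  rwa [heq] at hmain
end

section
/- The functions W_1^{(2)}(x) = ℏ^2[-x/y^4 + (x^2+T)/y^5] + T/y^5 and W_1^{(1)}(x) = (ℏ/2)(1/y - x/y^2), W_2^{(0)}(x,x) = T/y^4 with y = sqrt(x^2-4T) satisfy the loop equation y(x) W_1^{(2)}(x) = W_1^{(1)}(x)^2 + ℏ (W_1^{(1)})'(x) + W_2^{(0)}(x,x) for all x with x^2 > 4T. -/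
theorem stmt_18 (T hbar : ℝ) (hT : 0 < T) (x : ℝ) (hx : x ^ 2 > 4 * T) :
    Real.sqrt (x ^ 2 - 4 * T) *
        (hbar ^ 2 * (-x / (Real.sqrt (x ^ 2 - 4 * T)) ^ 4
            + (x ^ 2 + T) / (Real.sqrt (x ^ 2 - 4 * T)) ^ 5)
          + T / (Real.sqrt (x ^ 2 - 4 * T)) ^ 5)
      = ((hbar / 2) * (1 / Real.sqrt (x ^ 2 - 4 * T)
            - x / (Real.sqrt (x ^ 2 - 4 * T)) ^ 2)) ^ 2
        + hbar * deriv (fun t => (hbar / 2) * (1 / Real.sqrt (t ^ 2 - 4 * T)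
            - t / (Real.sqrt (t ^ 2 - 4 * T)) ^ 2)) x
        + T / (Real.sqrt (x ^ 2 - 4 * T)) ^ 4 := by
  have hy2 : (0:ℝ) < x ^ 2 - 4 * T := by linarith
  set y := Real.sqrt (x ^ 2 - 4 * T) with hy
  have hypos : 0 < y := Real.sqrt_pos.mpr hy2
  have hysq : y ^ 2 = x ^ 2 - 4 * T := Real.sq_sqrt hy2.le
  have h1 : HasDerivAt (fun t : ℝ => t ^ 2 - 4 * T) (2 * x) x := by
    simpa using ((hasDerivAt_pow 2 x).sub_const (4 * T))
  have hs : HasDerivAt (fun t : ℝ => Real.sqrt (t ^ 2 - 4 * T)) (2 * x / (2 * y)) x :=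
    h1.sqrt hy2.ne'
  have hinv : HasDerivAt (fun t : ℝ => 1 / Real.sqrt (t ^ 2 - 4 * T)) (-(x / y ^ 3)) x := by
    have h := hs.inv hypos.ne'
    have : -(2 * x / (2 * y)) / y ^ 2 = -(x / y ^ 3) := by
      field_simp
    have h' : HasDerivAt (fun t : ℝ => (Real.sqrt (t ^ 2 - 4 * T))⁻¹) (-(2 * x / (2 * y)) / y ^ 2) x := h
    rw [this] at h'
    simpa [one_div] using h'
  have hdiv : HasDerivAt (fun t : ℝ => t / (Real.sqrt (t ^ 2 - 4 * T)) ^ 2)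
      (1 / y ^ 2 - 2 * x ^ 2 / y ^ 4) x := by
    have hg : HasDerivAt (fun t : ℝ => (Real.sqrt (t ^ 2 - 4 * T)) ^ 2)
        (2 * y ^ 1 * (2 * x / (2 * y))) x := hs.pow 2
    have h := (hasDerivAt_id x).div hg (by positivity)
    have h' : HasDerivAt (fun t : ℝ => t / (Real.sqrt (t ^ 2 - 4 * T)) ^ 2)
        ((1 * Real.sqrt (x ^ 2 - 4 * T) ^ 2 - x * (2 * y ^ 1 * (2 * x / (2 * y)))) / (Real.sqrt (x ^ 2 - 4 * T) ^ 2) ^ 2) x := h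
    convert h' using 1
    rw [show Real.sqrt (x ^ 2 - 4 * T) ^ 2 = y ^ 2 from rfl, hysq]
    field_simp
    linear_combination (2 * x ^ 2 * (y ^ 2 + x ^ 2 - 4 * T)) * hysq
  have hder : HasDerivAt (fun t : ℝ => (hbar / 2) * (1 / Real.sqrt (t ^ 2 - 4 * T)
      - t / (Real.sqrt (t ^ 2 - 4 * T)) ^ 2))
      ((hbar / 2) * (-(x / y ^ 3) - (1 / y ^ 2 - 2 * x ^ 2 / y ^ 4))) x :=
    (hinv.sub hdiv).const_mul (hbar / 2)
  rw [hder.deriv]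
  have hyne : y ≠ 0 := hypos.ne'
  rw [show x ^ 2 = y ^ 2 + 4 * T by linarith [hysq]]
  field_simp
  linear_combination hbar ^ 2 * hysq
end
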